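/- Let u : ℝ^d → ℝ be L-Lipschitz with u(x₀) ≥ 4^{d+1} η r for some x₀ ∈ B_{r/2} and η, r > 0 with η ≤ L/4. Then u(ξ) ≥ (4^{d+1} − 1) η r for every ξ ∈ B_{ηr/L}(x₀), and consequently, for any measurable function h : B_r → ℝ with |h| ≤ 4^d η r on B_{ηr/L}(x₀), one has the lower bound ⨍_{B_r} [(u − h)⁺]² dx ≥ (η/L)^d · ((4^{d+1} − 1 − 4^d) η r)² ≥ (η^{d+2}/L^d) r². -/

import Mathlib

open MeasureTheory Metric

/-- quantitative nondegeneracy. If `u` is `L`-Lipschitz with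
`u(x₀) ≥ 4^{d+1} η r`, `x₀ ∈ B_{r/2}`, `η ≤ L/4`, then `u ≥ (4^{d+1}−1) η r` on
`B_{ηr/L}(x₀)`, and for any measurable `h` with `|h| ≤ 4^d η r` on that ball,
`⨍_{B_r} [(u−h)⁺]² ≥ (η/L)^d ((4^{d+1}−1−4^d) η r)² ≥ (η^{d+2}/L^d) r²`. -/
theorem stmt9 (d : ℕ) (L η r : ℝ) (hL : 0 < L) (hη : 0 < η) (hr : 0 < r)
    (hηL : η ≤ L / 4)
    (u : EuclideanSpace ℝ (Fin d) → ℝ) (hlip : LipschitzWith (Real.toNNReal L) u)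
    (x₀ : EuclideanSpace ℝ (Fin d)) (hx₀ : x₀ ∈ ball (0 : EuclideanSpace ℝ (Fin d)) (r / 2))
    (hval : 4 ^ (d + 1) * η * r ≤ u x₀)
    (h : EuclideanSpace ℝ (Fin d) → ℝ) (hmeas : Measurable h)
    (hh : ∀ x ∈ ball x₀ (η * r / L), |h x| ≤ 4 ^ d * η * r)
    (hint : IntegrableOn (fun x => (max (u x - h x) 0) ^ 2)
      (ball (0 : EuclideanSpace ℝ (Fin d)) r)) :
    (∀ ξ ∈ ball x₀ (η * r / L), (4 ^ (d + 1) - 1) * η * r ≤ u ξ) ∧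
      (η / L) ^ d * ((4 ^ (d + 1) - 1 - 4 ^ d) * η * r) ^ 2
        ≤ ⨍ x in ball (0 : EuclideanSpace ℝ (Fin d)) r, (max (u x - h x) 0) ^ 2 ∧
      η ^ (d + 2) / L ^ d * r ^ 2
        ≤ (η / L) ^ d * ((4 ^ (d + 1) - 1 - 4 ^ d) * η * r) ^ 2 := by
  have hρ : 0 < η * r / L := by positivity
  -- Part 1
  have part1 : ∀ ξ ∈ ball x₀ (η * r / L), (4 ^ (d + 1) - 1) * η * r ≤ u ξ := by
    intro ξ hξ
    have hd : dist ξ x₀ < η * r / L := mem_ball.1 hξ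
    have hlipd : dist (u ξ) (u x₀) ≤ L * dist ξ x₀ := by
      have := hlip.dist_le_mul ξ x₀
      rwa [Real.coe_toNNReal _ hL.le] at this
    have : dist (u ξ) (u x₀) ≤ η * r := by
      calc dist (u ξ) (u x₀) ≤ L * dist ξ x₀ := hlipd
        _ ≤ L * (η * r / L) := by nlinarith
        _ = η * r := by field_simp
    have habs : |u ξ - u x₀| ≤ η * r := by rwa [Real.dist_eq] at this
    have := abs_le.1 habs
    nlinarith [this.1]
  refine ⟨part1, ?_, ?_⟩
  · -- Part 2
    set c : ℝ := (4 ^ (d + 1) - 1 - 4 ^ d) * η * r with hc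
    have h4 : (1:ℝ) ≤ 4 ^ d := one_le_pow₀ (by norm_num)
    have hcpos : 0 < c := by
      have : (4:ℝ) ^ (d + 1) = 4 * 4 ^ d := by ring
      rw [hc, this]; nlinarith [mul_pos hη hr]
    set S := ball x₀ (η * r / L) with hS
    set B := ball (0 : EuclideanSpace ℝ (Fin d)) r with hB
    have hSB : S ⊆ B := by
      apply ball_subset_ball'
      have : dist x₀ 0 < r / 2 := mem_ball.1 hx₀
      have : η * r / L ≤ r / 4 := by
        rw [div_le_iff₀ hL]; nlinarith
      linarith
    -- pointwise lower bound on S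
    have hpt : ∀ x ∈ S, c ^ 2 ≤ (max (u x - h x) 0) ^ 2 := by
      intro x hx
      have h1 := part1 x hx
      have h2 := hh x hx
      have h3 : c ≤ u x - h x := by
        have := (abs_le.1 h2).2
        rw [hc]; nlinarith
      have h4' : c ≤ max (u x - h x) 0 := le_trans h3 (le_max_left _ _)
      have : 0 ≤ max (u x - h x) 0 := le_max_right _ _
      nlinarith
    have hμS : volume S ≠ ⊤ := measure_ball_lt_top.ne
    have hintS : IntegrableOn (fun x => (max (u x - h x) 0) ^ 2) S := hint.mono_set hSB
    have key1 : c ^ 2 * (volume S).toReal ≤ ∫ x in S, (max (u x - h x) 0) ^ 2 :=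
      setIntegral_ge_of_const_le_real measurableSet_ball hμS hpt hintS
    have key2 : ∫ x in S, (max (u x - h x) 0) ^ 2 ≤ ∫ x in B, (max (u x - h x) 0) ^ 2 := by
      apply setIntegral_mono_set hint
      · filter_upwards with x using by positivity
      · exact HasSubset.Subset.eventuallyLE hSB
    -- volume computation
    have hvolS : volume S = ENNReal.ofReal ((η * r / L) ^ d) *
        volume (ball (0 : EuclideanSpace ℝ (Fin d)) 1) :=
      (Measure.addHaar_ball_of_pos volume x₀ hρ).trans (by
        rw [finrank_euclideanSpace_fin])
    have hvolB : volume B = ENNReal.ofReal (r ^ d) *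
        volume (ball (0 : EuclideanSpace ℝ (Fin d)) 1) :=
      (Measure.addHaar_ball_of_pos volume 0 hr).trans (by
        rw [finrank_euclideanSpace_fin])
    have hvol1 : volume (ball (0 : EuclideanSpace ℝ (Fin d)) 1) ≠ ⊤ :=
      measure_ball_lt_top.ne
    have hvol1pos : 0 < volume (ball (0 : EuclideanSpace ℝ (Fin d)) 1) :=
      measure_ball_pos _ _ one_pos
    have hSreal : (volume S).toReal = (η / L) ^ d * (volume B).toReal := by
      rw [hvolS, hvolB, ENNReal.toReal_mul, ENNReal.toReal_mul,
        ENNReal.toReal_ofReal (by positivity), ENNReal.toReal_ofReal (by positivity)]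
      rw [div_pow, div_pow]
      field_simp
      ring
    have hBpos : 0 < (volume B).toReal := by
      apply ENNReal.toReal_pos
      · exact (measure_ball_pos _ _ hr).ne'
      · exact measure_ball_lt_top.ne
    rw [setAverage_eq, smul_eq_mul, measureReal_def, le_inv_mul_iff₀ hBpos]
    calc (volume B).toReal * ((η / L) ^ d * c ^ 2)
        = c ^ 2 * (volume S).toReal := by rw [hSreal]; ring
      _ ≤ ∫ x in S, (max (u x - h x) 0) ^ 2 := key1
      _ ≤ ∫ x in B, (max (u x - h x) 0) ^ 2 := key2
  · -- Part 3
    have h4 : (1:ℝ) ≤ 4 ^ d := one_le_pow₀ (by norm_num)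
    have hkey : (1:ℝ) ≤ (4 ^ (d + 1) - 1 - 4 ^ d) ^ 2 := by
      have : (4:ℝ) ^ (d + 1) = 4 * 4 ^ d := by ring
      nlinarith
    have h1 : η ^ (d + 2) / L ^ d * r ^ 2 = (η / L) ^ d * (η * r) ^ 2 := by
      rw [div_pow, pow_add]
      field_simp
    have h2 : (η / L) ^ d * ((4 ^ (d + 1) - 1 - 4 ^ d) * η * r) ^ 2
        = (η / L) ^ d * ((4 ^ (d + 1) - 1 - 4 ^ d) ^ 2 * (η * r) ^ 2) := by ring
    rw [h1, h2]
    apply mul_le_mul_of_nonneg_left _ (by positivity)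
    nlinarith [sq_nonneg (η * r), mul_pos hη hr]
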